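/- arXiv:1502.02267 — 2 statements merged into one kernel-verified Lean document; each statement's English description precedes it below -/
import Mathlib

section
/- Let $V$ be a right vector space over the quaternions $\mathbb{H}$ and let $Q$ be a real quadratic form on $V$ (viewed as a real vector space). Then the average of $Q$ over the group $SU(2)$ of unit quaternions (acting by right multiplication) equals $\frac{1}{4}(Q(x) + Q(x\cdot i) + Q(x\cdot j) + Q(x\cdot k))$ for every $x \in V$. -/
/-!
For a unit quaternion `L`, the vectors `L, iL, jL, kL` form an orthonormal basis of `ℍ ≅ ℝ⁴`,
so for every quadratic form `P` on `ℍ` the sum `P L + P (iL) + P (jL) + P (kL)` equals the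
trace `P 1 + P i + P j + P k`. By left invariance of the Haar measure the four integrals
`∫ P (e L)`, `e ∈ {1, i, j, k}`, coincide, so each is a quarter of the trace. The theorem is
the case `P q = Q (x · q)`.
-/

open MeasureTheory

/-- Borel measurable structure on the group `SU(2)` of unit quaternions. -/
noncomputable instance : MeasurableSpace (Metric.sphere (0 : Quaternion ℝ) 1) := borel _
instance : BorelSpace (Metric.sphere (0 : Quaternion ℝ) 1) := ⟨rfl⟩

/-- The quaternion units `i`, `j`, `k`. -/
noncomputable def qi : Quaternion ℝ := ⟨0, 1, 0, 0⟩
noncomputable def qj : Quaternion ℝ := ⟨0, 0, 1, 0⟩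
noncomputable def qk : Quaternion ℝ := ⟨0, 0, 0, 1⟩

open Quaternion MulOpposite

local notation "SU₂" => Metric.sphere (0 : Quaternion ℝ) 1

@[simp] lemma re_qi : qi.re = 0 := rfl
@[simp] lemma imI_qi : qi.imI = 1 := rfl
@[simp] lemma imJ_qi : qi.imJ = 0 := rfl
@[simp] lemma imK_qi : qi.imK = 0 := rfl
@[simp] lemma re_qj : qj.re = 0 := rfl
@[simp] lemma imI_qj : qj.imI = 0 := rfl
@[simp] lemma imJ_qj : qj.imJ = 1 := rfl
@[simp] lemma imK_qj : qj.imK = 0 := rfl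
@[simp] lemma re_qk : qk.re = 0 := rfl
@[simp] lemma imI_qk : qk.imI = 0 := rfl
@[simp] lemma imJ_qk : qk.imJ = 0 := rfl
@[simp] lemma imK_qk : qk.imK = 1 := rfl

lemma norm_qi : ‖qi‖ = 1 := by
  rw [norm_eq_sqrt_real_inner, inner_self, normSq_def']; simp

lemma norm_qj : ‖qj‖ = 1 := by
  rw [norm_eq_sqrt_real_inner, inner_self, normSq_def']; simp

lemma norm_qk : ‖qk‖ = 1 := by
  rw [norm_eq_sqrt_real_inner, inner_self, normSq_def']; simp

lemma Quaternion.eq_re_add_imI_add_imJ_add_imK (q : Quaternion ℝ) :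
    q = q.re • 1 + q.imI • qi + q.imJ • qj + q.imK • qk := by
  ext <;> simp

namespace QuadraticMap

variable {N : Type*} [AddCommGroup N] [Module ℝ N]

theorem map_quaternion (P : QuadraticMap ℝ (Quaternion ℝ) N) (q : Quaternion ℝ) :
    P q = q.re ^ 2 • P 1 + q.imI ^ 2 • P qi + q.imJ ^ 2 • P qj + q.imK ^ 2 • P qk
      + (q.re * q.imI) • polar P 1 qi + (q.re * q.imJ) • polar P 1 qj
      + (q.re * q.imK) • polar P 1 qk + (q.imI * q.imJ) • polar P qi qj
      + (q.imI * q.imK) • polar P qi qk + (q.imJ * q.imK) • polar P qj qk := by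
  nth_rewrite 1 [q.eq_re_add_imI_add_imJ_add_imK]
  simp only [QuadraticMap.map_add P, polar_add_left, polar_smul_left, polar_smul_right,
    P.map_smul]
  module

theorem map_add_map_mul_left_qi_qj_qk (P : QuadraticMap ℝ (Quaternion ℝ) N)
    (q : Quaternion ℝ) :
    P q + P (qi * q) + P (qj * q) + P (qk * q) = normSq q • (P 1 + P qi + P qj + P qk) := by
  rw [P.map_quaternion q, P.map_quaternion (qi * q), P.map_quaternion (qj * q),
    P.map_quaternion (qk * q), normSq_def']
  simp only [re_mul, imI_mul, imJ_mul, imK_mul, re_qi, imI_qi, imJ_qi, imK_qi, re_qj, imI_qj,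
    imJ_qj, imK_qj, re_qk, imI_qk, imJ_qk, imK_qk]
  module

theorem continuous_quaternion [TopologicalSpace N] [IsTopologicalAddGroup N]
    [ContinuousSMul ℝ N] (P : QuadraticMap ℝ (Quaternion ℝ) N) : Continuous P := by
  have := continuous_re; have := continuous_imI; have := continuous_imJ; have := continuous_imK
  rw [funext P.map_quaternion]
  fun_prop

end QuadraticMap

section UnitSphere

variable {E : Type*} [NormedAddCommGroup E] [NormedSpace ℝ E] (μ : Measure SU₂)

lemma integral_comp_mul_left_unitSphere [μ.IsMulLeftInvariant] (f : Quaternion ℝ → E)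
    {q : Quaternion ℝ} (hq : ‖q‖ = 1) : ∫ L : SU₂, f (q * L) ∂μ = ∫ L, f L ∂μ :=
  integral_mul_left_eq_self (fun L : SU₂ => f L) ⟨q, mem_sphere_zero_iff_norm.2 hq⟩

theorem integral_quadraticMap_unitSphere [CompleteSpace E] [μ.IsMulLeftInvariant]
    [IsProbabilityMeasure μ] (P : QuadraticMap ℝ (Quaternion ℝ) E) :
    ∫ L : SU₂, P L ∂μ = (1 / 4 : ℝ) • (P 1 + P qi + P qj + P qk) := by
  have hP := P.continuous_quaternion
  have hint {f : SU₂ → E} (hf : Continuous f) : Integrable f μ :=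
    integrableOn_univ.mp (hf.continuousOn.integrableOn_compact isCompact_univ)
  have hsum : ∫ L : SU₂, (P L + P (qi * L) + P (qj * L) + P (qk * L)) ∂μ
      = P 1 + P qi + P qj + P qk := by
    simp_rw [P.map_add_map_mul_left_qi_qj_qk, normSq_eq_norm_mul_self, norm_eq_of_mem_sphere]
    rw [integral_const]; simp
  calc ∫ L : SU₂, P L ∂μ
      = (1 / 4 : ℝ) • (∫ L : SU₂, P L ∂μ + ∫ L : SU₂, P (qi * L) ∂μ
          + ∫ L : SU₂, P (qj * L) ∂μ + ∫ L : SU₂, P (qk * L) ∂μ) := by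
        rw [integral_comp_mul_left_unitSphere μ P norm_qi,
          integral_comp_mul_left_unitSphere μ P norm_qj,
          integral_comp_mul_left_unitSphere μ P norm_qk]
        module
    _ = (1 / 4 : ℝ) • (P 1 + P qi + P qj + P qk) := by
        rw [← hsum, integral_add, integral_add, integral_add] <;> exact hint (by fun_prop)

end UnitSphere

/-- The average over `SU(2)` (with respect to the Haar probability measure) of a real
quadratic form `Q` on a right quaternionic vector space `V` equals
`(1/4)(Q(x) + Q(x·i) + Q(x·j) + Q(x·k))`. The right action of a quaternion `q` on `V` is
`MulOpposite.op q • x`. -/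
theorem average_over_SU2_of_quadratic_form
    (V : Type*) [AddCommGroup V] [Module ℝ V] [Module (Quaternion ℝ)ᵐᵒᵖ V]
    [IsScalarTower ℝ (Quaternion ℝ)ᵐᵒᵖ V]
    (Q : QuadraticForm ℝ V)
    (μ : Measure (Metric.sphere (0 : Quaternion ℝ) 1))
    [μ.IsHaarMeasure] [IsProbabilityMeasure μ] (x : V) :
    (∫ L : Metric.sphere (0 : Quaternion ℝ) 1, Q (MulOpposite.op (L : Quaternion ℝ) • x) ∂μ)
      = (1 / 4) * (Q x + Q (MulOpposite.op qi • x) + Q (MulOpposite.op qj • x)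
          + Q (MulOpposite.op qk • x)) := by
  let orbitMap : Quaternion ℝ →ₗ[ℝ] V :=
    (LinearMap.toSpanSingleton (Quaternion ℝ)ᵐᵒᵖ V x).restrictScalars ℝ ∘ₗ
      (opLinearEquiv ℝ).toLinearMap
  simpa [orbitMap] using integral_quadraticMap_unitSphere μ (Q.comp orbitMap)
end

section
/- The average $\langle Q\rangle_u(x) = \frac{1}{4}(Q(x) + Q(x\cdot i) + Q(x\cdot j) + Q(x\cdot k))$ of a quadratic form $Q$ on a right $\mathbb{H}$-vector space $V$ is invariant under the right action of $SU(2)$: for every unit quaternion $L$ and every $x\in V$, $\langle Q\rangle_u(x\cdot L) = \langle Q\rangle_u(x)$. -/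
/-!
For fixed `x`, `P q := Q (x·q)` is a quadratic form on `ℍ ≅ ℝ⁴`, and `⟨Q⟩_u(x·L)` is a quarter
of `P L + P (L i) + P (L j) + P (L k)`. Left multiplication by `L` is `‖L‖` times a rotation of
`ℍ`, so `L, L i, L j, L k` is `‖L‖` times an orthonormal basis, and the trace of `P` computed in
it is `‖L‖²` times its trace `P 1 + P i + P j + P k`: in coordinates, the cross terms cancel.
-/

open Quaternion MulOpposite QuadraticMap

lemma eq_re_smul_one_add (q : ℍ[ℝ]) :
    q = q.re • 1 + q.imI • qi + q.imJ • qj + q.imK • qk := by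
  ext <;> simp [re_smul] <;> simp [qi, qj, qk]

lemma mul_qi_eq (q : ℍ[ℝ]) :
    q * qi = (-q.imI) • 1 + q.re • qi + q.imK • qj + (-q.imJ) • qk := by
  ext <;> simp [re_smul, re_mul, imI_mul, imJ_mul, imK_mul] <;> simp [qi, qj, qk]

lemma mul_qj_eq (q : ℍ[ℝ]) :
    q * qj = (-q.imJ) • 1 + (-q.imK) • qi + q.re • qj + q.imI • qk := by
  ext <;> simp [re_smul, re_mul, imI_mul, imJ_mul, imK_mul] <;> simp [qi, qj, qk]

lemma mul_qk_eq (q : ℍ[ℝ]) :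
    q * qk = (-q.imK) • 1 + q.imJ • qi + (-q.imI) • qj + q.re • qk := by
  ext <;> simp [re_smul, re_mul, imI_mul, imJ_mul, imK_mul] <;> simp [qi, qj, qk]

lemma QuadraticMap.apply_smul_one_add_smul_qi (P : QuadraticForm ℝ ℍ[ℝ]) (a b c d : ℝ) :
    P (a • 1 + b • qi + c • qj + d • qk) =
      a ^ 2 * P 1 + b ^ 2 * P qi + c ^ 2 * P qj + d ^ 2 * P qk
      + a * b * polar P 1 qi + a * c * polar P 1 qj + a * d * polar P 1 qk
      + b * c * polar P qi qj + b * d * polar P qi qk + c * d * polar P qj qk := by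
  simp only [QuadraticMap.map_add P, polar_add_left, polar_smul_left, polar_smul_right,
    QuadraticMap.map_smul, smul_eq_mul]
  ring

lemma QuadraticMap.sum_apply_mul_units (P : QuadraticForm ℝ ℍ[ℝ]) (q : ℍ[ℝ]) :
    P q + P (q * qi) + P (q * qj) + P (q * qk) = normSq q * (P 1 + P qi + P qj + P qk) := by
  have hq := P.apply_smul_one_add_smul_qi q.re q.imI q.imJ q.imK
  rw [← eq_re_smul_one_add] at hq
  rw [hq, mul_qi_eq, mul_qj_eq, mul_qk_eq, P.apply_smul_one_add_smul_qi,
    P.apply_smul_one_add_smul_qi, P.apply_smul_one_add_smul_qi, normSq_def']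
  ring

section RightAction

variable {V : Type*} [AddCommGroup V] [Module ℝ V] [Module ℍ[ℝ]ᵐᵒᵖ V]
  [IsScalarTower ℝ ℍ[ℝ]ᵐᵒᵖ V]

noncomputable def rightSMulLinear (x : V) : ℍ[ℝ] →ₗ[ℝ] V where
  toFun q := op q • x
  map_add' _ _ := by rw [op_add, add_smul]
  map_smul' _ _ := by rw [op_smul, smul_assoc]; rfl

lemma rightSMulLinear_apply (x : V) (q : ℍ[ℝ]) : rightSMulLinear x q = op q • x := rfl

end RightAction

/-- The average `⟨Q⟩_u(x) = (1/4)(Q(x) + Q(x·i) + Q(x·j) + Q(x·k))` of a quadratic form `Q`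
on a right quaternionic vector space `V` is invariant under the right action of `SU(2)`:
for every unit quaternion `L` and every `x`, `⟨Q⟩_u(x·L) = ⟨Q⟩_u(x)`.
The right action of a quaternion `q` on `V` is `MulOpposite.op q • x`. -/
theorem average_invariant_under_SU2
    (V : Type*) [AddCommGroup V] [Module ℝ V] [Module (Quaternion ℝ)ᵐᵒᵖ V]
    [IsScalarTower ℝ (Quaternion ℝ)ᵐᵒᵖ V]
    (Q : QuadraticForm ℝ V)
    (avg : V → ℝ)
    (havg : avg = fun x => (1 / 4) * (Q x + Q (MulOpposite.op qi • x)
        + Q (MulOpposite.op qj • x) + Q (MulOpposite.op qk • x)))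
    (L : Quaternion ℝ) (hL : ‖L‖ = 1) (x : V) :
    avg (MulOpposite.op L • x) = avg x := by
  subst havg
  have hnormSq : normSq L = 1 := by rw [normSq_eq_norm_mul_self, hL, one_mul]
  have h := (Q.comp (rightSMulLinear x)).sum_apply_mul_units L
  simp only [QuadraticMap.comp_apply, rightSMulLinear_apply, op_mul, mul_smul, op_one, one_smul,
    hnormSq, one_mul] at h
  simp only [h]
end
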